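/- Let c ≥ 1 be a natural number and let w be a Gauss word of length 2c. Then for all assignments x, y : Fin c → Bool, one has (∀ b : Fin (2c), d_b(x) + d_b(y) = c) if and only if y is the pointwise Boolean negation of x. Consequently, the 2^c assignments split into exactly 2^{c−1} disjoint pairs whose warping degree sequences sum to the constant sequence (c, c, …, c), and this collection of pairs is unique. This is property (iii) of the warping matrix. -/

import Mathlib

/-!
Negating an assignment swaps "under" and "over" at every position, hence turns every warping
crossing into a non-crossing and back: `d_b(x) + d_b(¬x) = c`. Conversely the degree sequence
determines the assignment: moving the base from `b` to `b + 1` only changes the status of the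
letter at `b`, so `d_{b+1} - d_b` is `-1` or `1` according as position `b` is passed under or
not, and reading this off at the first position of each letter recovers `x`. Hence
`d(x) + d(y) = (c, …, c)` iff `y = ¬x`, and the pairs are the orbits of the fixed-point-free
involution `x ↦ ¬x`.
-/

namespace Warping

/-- A Gauss word of length `2c`: every letter occurs at exactly two positions. -/
def IsGaussWord (c : ℕ) (w : Fin (2*c) → Fin c) : Prop :=
  ∀ i : Fin c, (Finset.univ.filter (fun j => w j = i)).card = 2

/-- The cyclic successor of an index. -/
def next {n : ℕ} (b : Fin n) : Fin n :=
  ⟨((b : ℕ) + 1) % n, Nat.mod_lt _ (Nat.lt_of_le_of_lt (Nat.zero_le _) b.isLt)⟩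

/-- `j` is the first (smaller) of the two positions of its letter. -/
def isFirst (c : ℕ) (w : Fin (2*c) → Fin c) (j : Fin (2*c)) : Prop :=
  ∀ j' : Fin (2*c), w j' = w j → j ≤ j'

/-- Under the assignment `x`, position `j` is passed under. -/
def passedUnder (c : ℕ) (w : Fin (2*c) → Fin c) (x : Fin c → Bool) (j : Fin (2*c)) : Prop :=
  (x (w j) = true) ↔ isFirst c w j

/-- Time at which position `j` is met in the cyclic traversal starting at base `b`. -/
def time (c : ℕ) (b j : Fin (2*c)) : ℕ := ((j : ℕ) + 2*c - (b : ℕ)) % (2*c)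

/-- The letter `i` is a warping crossing for assignment `x` and base `b`: the position of `i`
met earlier in the cyclic traversal starting at `b` is passed under. -/
def IsWarpingCrossing (c : ℕ) (w : Fin (2*c) → Fin c) (x : Fin c → Bool)
    (b : Fin (2*c)) (i : Fin c) : Prop :=
  ∃ j : Fin (2*c), w j = i ∧ (∀ j' : Fin (2*c), w j' = i → time c b j ≤ time c b j') ∧
    passedUnder c w x j

open scoped Classical in
/-- The warping degree of the assignment `x` with base point `b`. -/
noncomputable def warpingDegree (c : ℕ) (w : Fin (2*c) → Fin c) (x : Fin c → Bool)
    (b : Fin (2*c)) : ℕ :=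
  (Finset.univ.filter (fun i => IsWarpingCrossing c w x b i)).card

/-- The step `d_{b+1}(x) - d_b(x)` of the warping degree sequence. -/
noncomputable def step (c : ℕ) (w : Fin (2*c) → Fin c) (x : Fin c → Bool) (b : Fin (2*c)) : ℤ :=
  (warpingDegree c w x (next b) : ℤ) - (warpingDegree c w x b : ℤ)

open Finset

section Time

variable {c : ℕ}

lemma time_eq_ite (b j : Fin (2*c)) :
    time c b j = if (b : ℕ) ≤ j then (j : ℕ) - b else (j : ℕ) + 2*c - b := by
  have hj := j.isLt
  unfold time
  split_ifs with h
  · rw [show (j : ℕ) + 2*c - b = (j - b) + 2*c by omega, Nat.add_mod_right,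
      Nat.mod_eq_of_lt (by omega)]
  · exact Nat.mod_eq_of_lt (by omega)

lemma time_lt (b j : Fin (2*c)) : time c b j < 2*c := by
  have := b.isLt; have := j.isLt
  rw [time_eq_ite]; split_ifs <;> omega

lemma time_self (b : Fin (2*c)) : time c b b = 0 := by
  simp [time_eq_ite]

lemma time_injective (b : Fin (2*c)) : Function.Injective (time c b) := by
  intro j j' h
  have := b.isLt; have := j.isLt; have := j'.isLt
  rw [time_eq_ite, time_eq_ite] at h
  ext
  split_ifs at h <;> omega

lemma val_next (b : Fin (2*c)) :
    (next b : ℕ) = if (b : ℕ) + 1 = 2*c then 0 else (b : ℕ) + 1 := by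
  have := b.isLt
  change ((b : ℕ) + 1) % (2*c) = _
  split_ifs with h
  · rw [h, Nat.mod_self]
  · exact Nat.mod_eq_of_lt (by omega)

lemma time_next_add_one {b j : Fin (2*c)} (hj : j ≠ b) : time c (next b) j + 1 = time c b j := by
  have := b.isLt; have := j.isLt
  have := Fin.val_ne_of_ne hj
  rw [time_eq_ite, time_eq_ite, val_next]
  split_ifs <;> omega

lemma time_next_self (b : Fin (2*c)) : time c (next b) b = 2*c - 1 := by
  have := b.isLt
  rw [time_eq_ite, val_next]
  split_ifs <;> omega

end Time

namespace IsGaussWord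

variable {c : ℕ} {w : Fin (2*c) → Fin c}

lemma exists_ne (hw : IsGaussWord c w) (j : Fin (2*c)) : ∃ j', j' ≠ j ∧ w j' = w j := by
  obtain ⟨j', hj', hne⟩ := exists_mem_ne (s := univ.filter (w · = w j)) (by rw [hw]; norm_num) j
  exact ⟨j', hne, (mem_filter.1 hj').2⟩

lemma exists_pair (hw : IsGaussWord c w) (i : Fin c) :
    ∃ j j', j ≠ j' ∧ w j = i ∧ w j' = i := by
  obtain ⟨j, hj⟩ := card_pos.1 (by rw [hw]; norm_num : 0 < (univ.filter (w · = i)).card)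
  obtain ⟨j', hne, hj'⟩ := hw.exists_ne j
  exact ⟨j, j', hne.symm, (mem_filter.1 hj).2, hj'.trans (mem_filter.1 hj).2⟩

lemma eq_or_eq (hw : IsGaussWord c w) {j j' k : Fin (2*c)} (hne : j ≠ j') (hww : w j = w j')
    (hk : w k = w j) : k = j ∨ k = j' := by
  have hsub : {j, j'} ⊆ univ.filter (w · = w j) := by
    simp [insert_subset_iff, hww]
  have hk' : k ∈ univ.filter (w · = w j) := by simp [hk]
  rw [← eq_of_subset_of_card_le hsub (by rw [hw, card_pair hne])] at hk'
  simpa using hk'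

lemma isFirst_iff_le (hw : IsGaussWord c w) {j j' : Fin (2*c)} (hne : j ≠ j')
    (hww : w j = w j') : isFirst c w j ↔ j ≤ j' := by
  refine ⟨fun h => h j' hww.symm, fun h k hk => ?_⟩
  rcases hw.eq_or_eq hne hww hk with rfl | rfl
  exacts [le_rfl, h]

lemma exists_isFirst (hw : IsGaussWord c w) (i : Fin c) : ∃ j, w j = i ∧ isFirst c w j := by
  obtain ⟨j, j', hne, hj, hj'⟩ := hw.exists_pair i
  rcases le_total j j' with h | h
  · exact ⟨j, hj, (hw.isFirst_iff_le hne (hj.trans hj'.symm)).2 h⟩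
  · exact ⟨j', hj', (hw.isFirst_iff_le hne.symm (hj'.trans hj.symm)).2 h⟩

lemma passedUnder_iff_not (hw : IsGaussWord c w) (x : Fin c → Bool) {j j' : Fin (2*c)}
    (hne : j ≠ j') (hww : w j = w j') : passedUnder c w x j ↔ ¬ passedUnder c w x j' := by
  have hfirst : isFirst c w j ↔ ¬ isFirst c w j' := by
    rw [hw.isFirst_iff_le hne hww, hw.isFirst_iff_le hne.symm hww.symm, not_le,
      le_iff_lt_or_eq, or_iff_left hne]
  unfold passedUnder
  rw [hww, hfirst]
  tauto

lemma isWarpingCrossing_iff (hw : IsGaussWord c w) (x : Fin c → Bool) {b j j' : Fin (2*c)}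
    (hne : j ≠ j') (hww : w j = w j') (hle : time c b j ≤ time c b j') :
    IsWarpingCrossing c w x b (w j) ↔ passedUnder c w x j := by
  have hmin : ∀ k, w k = w j → time c b j ≤ time c b k := fun k hk => by
    rcases hw.eq_or_eq hne hww hk with rfl | rfl
    exacts [le_rfl, hle]
  refine ⟨fun ⟨k, hk, hkmin, hku⟩ => ?_, fun h => ⟨j, rfl, hmin, h⟩⟩
  rwa [time_injective b (le_antisymm (hkmin j rfl) (hmin k hk))] at hku

lemma exists_isWarpingCrossing_iff (hw : IsGaussWord c w) (b : Fin (2*c)) (i : Fin c) :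
    ∃ j, w j = i ∧ ∀ x, IsWarpingCrossing c w x b i ↔ passedUnder c w x j := by
  obtain ⟨j, j', hne, rfl, hj'⟩ := hw.exists_pair i
  rcases le_total (time c b j) (time c b j') with h | h
  · exact ⟨j, rfl, fun x => hw.isWarpingCrossing_iff x hne hj'.symm h⟩
  · refine ⟨j', hj', fun x => ?_⟩
    rw [← hj']
    exact hw.isWarpingCrossing_iff x hne.symm hj' h

lemma isWarpingCrossing_not_iff (hw : IsGaussWord c w) (x : Fin c → Bool) (b : Fin (2*c))
    (i : Fin c) :
    IsWarpingCrossing c w (fun i => !x i) b i ↔ ¬ IsWarpingCrossing c w x b i := by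
  obtain ⟨j, -, hj⟩ := hw.exists_isWarpingCrossing_iff b i
  rw [hj, hj]
  unfold passedUnder
  cases hx : x (w j) <;> simp [hx]

lemma warpingDegree_add_warpingDegree_not (hw : IsGaussWord c w) (x : Fin c → Bool)
    (b : Fin (2*c)) : warpingDegree c w x b + warpingDegree c w (fun i => !x i) b = c := by
  classical
  unfold warpingDegree
  simp_rw [hw.isWarpingCrossing_not_iff]
  rw [card_filter_add_card_filter_not, card_univ, Fintype.card_fin]

lemma isWarpingCrossing_self_iff (hw : IsGaussWord c w) (x : Fin c → Bool) (b : Fin (2*c)) :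
    IsWarpingCrossing c w x b (w b) ↔ passedUnder c w x b := by
  obtain ⟨b', hne, hb'⟩ := hw.exists_ne b
  exact hw.isWarpingCrossing_iff x hne.symm hb'.symm (by rw [time_self]; exact Nat.zero_le _)

/-- Seen from `b + 1`, the position `b` is the last one met, so its partner decides. -/
lemma isWarpingCrossing_next_self_iff (hw : IsGaussWord c w) (x : Fin c → Bool)
    (b : Fin (2*c)) : IsWarpingCrossing c w x (next b) (w b) ↔ ¬ passedUnder c w x b := by
  obtain ⟨b', hne, hb'⟩ := hw.exists_ne b
  have hle : time c (next b) b' ≤ time c (next b) b := by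
    have := time_lt (next b) b'
    rw [time_next_self]; omega
  rw [← hb', hw.isWarpingCrossing_iff x hne hb' hle,
    hw.passedUnder_iff_not x hne hb']

lemma isWarpingCrossing_next_iff (hw : IsGaussWord c w) (x : Fin c → Bool) {b : Fin (2*c)}
    {i : Fin c} (hi : i ≠ w b) :
    IsWarpingCrossing c w x (next b) i ↔ IsWarpingCrossing c w x b i := by
  obtain ⟨j, j', hne, rfl, hj'⟩ := hw.exists_pair i
  have hjb : j ≠ b := fun h => hi (h ▸ rfl)
  have hj'b : j' ≠ b := fun h => hi (h ▸ hj'.symm)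
  have := time_next_add_one hjb
  have := time_next_add_one hj'b
  rcases le_total (time c b j) (time c b j') with h | h
  · rw [hw.isWarpingCrossing_iff x hne hj'.symm h,
      hw.isWarpingCrossing_iff x hne hj'.symm (by omega)]
  · rw [← hj', hw.isWarpingCrossing_iff x hne.symm hj' h,
      hw.isWarpingCrossing_iff x hne.symm hj' (by omega)]

open scoped Classical in
/-- Moving the base across `b` changes the status of the letter at `b` only. -/
lemma step_eq (hw : IsGaussWord c w) (x : Fin c → Bool) (b : Fin (2*c)) :
    step c w x b = if passedUnder c w x b then -1 else 1 := by
  classical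
  have hsum : step c w x b = ∑ i, ((if IsWarpingCrossing c w x (next b) i then 1 else 0) -
      (if IsWarpingCrossing c w x b i then 1 else 0) : ℤ) := by
    simp only [step, warpingDegree, card_filter, sum_sub_distrib]
    push_cast
    rfl
  rw [hsum, sum_eq_single (w b) (fun i _ hi => by simp [hw.isWarpingCrossing_next_iff x hi])
    (by simp), hw.isWarpingCrossing_next_self_iff, hw.isWarpingCrossing_self_iff]
  split_ifs <;> simp_all

lemma eq_of_warpingDegree_eq (hw : IsGaussWord c w) {x y : Fin c → Bool}
    (h : ∀ b, warpingDegree c w x b = warpingDegree c w y b) : x = y := by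
  have hpassed : ∀ b, passedUnder c w x b ↔ passedUnder c w y b := fun b => by
    have := hw.step_eq x b
    rw [step, h, h, ← step, hw.step_eq y b] at this
    split_ifs at this <;> simp_all
  funext i
  obtain ⟨j, rfl, hj⟩ := hw.exists_isFirst i
  have := hpassed j
  simp only [passedUnder, iff_true_intro hj, iff_true] at this
  exact Bool.eq_iff_iff.2 this

lemma warpingDegree_add_eq_iff (hw : IsGaussWord c w) (x y : Fin c → Bool) :
    (∀ b, warpingDegree c w x b + warpingDegree c w y b = c) ↔ y = fun i => !x i := by
  refine ⟨fun h => hw.eq_of_warpingDegree_eq fun b => ?_, fun h => h ▸ ?_⟩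
  · have := hw.warpingDegree_add_warpingDegree_not x b
    have := h b
    omega
  · exact hw.warpingDegree_add_warpingDegree_not x

end IsGaussWord

section InvolutionPairs

variable {α : Type*} [DecidableEq α] {σ : α → α}

def involutionPairs [Fintype α] (σ : α → α) : Finset (Finset α) :=
  univ.image fun x => {x, σ x}

lemma mem_involutionPairs [Fintype α] {p : Finset α} : p ∈ involutionPairs σ ↔ ∃ a, {a, σ a} = p := by
  simp [involutionPairs]

lemma pair_eq_pair_iff_mem (hσ : Function.Involutive σ) {x a : α} :
    ({x, σ x} : Finset α) = {a, σ a} ↔ x ∈ ({a, σ a} : Finset α) := by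
  refine ⟨fun h => h ▸ mem_insert_self x _, fun h => ?_⟩
  rcases mem_insert.1 h with rfl | h
  · rfl
  · rw [mem_singleton.1 h, hσ a, pair_comm]

lemma exists_eq_pair_of_forall_mem {p : Finset α} (hp : p.card = 2)
    (hσp : ∀ x ∈ p, ∀ y ∈ p, x ≠ y → y = σ x) : ∃ a, {a, σ a} = p := by
  obtain ⟨a, b, hab, rfl⟩ := card_eq_two.1 hp
  exact ⟨a, by rw [hσp a (by simp) b (by simp) hab]⟩

lemma two_mul_card_involutionPairs [Fintype α] (hσ : Function.Involutive σ) (hfix : ∀ x, σ x ≠ x) :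
    2 * (involutionPairs σ).card = Fintype.card α := by
  have hfiber : ∀ p ∈ involutionPairs σ, (univ.filter fun x => {x, σ x} = p).card = 2 := by
    intro p hp
    obtain ⟨a, rfl⟩ := mem_involutionPairs.1 hp
    have : (univ.filter fun x => ({x, σ x} : Finset α) = {a, σ a}) = {a, σ a} := by
      ext x
      simp only [mem_filter, mem_univ, true_and, pair_eq_pair_iff_mem hσ]
    rw [this, card_pair (hfix a).symm]
  rw [← card_univ, card_eq_sum_card_fiberwise (t := involutionPairs σ)
    (fun x _ => mem_involutionPairs.2 ⟨x, rfl⟩), sum_congr rfl hfiber, sum_const, smul_eq_mul,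
    mul_comm]

theorem existsUnique_involutionPairs [Fintype α] (hσ : Function.Involutive σ) (hfix : ∀ x, σ x ≠ x) :
    ∃! P : Finset (Finset α), 2 * P.card = Fintype.card α ∧ (∀ p ∈ P, p.card = 2) ∧
      (∀ x, ∃! p, p ∈ P ∧ x ∈ p) ∧ (∀ p ∈ P, ∀ x ∈ p, ∀ y ∈ p, x ≠ y → y = σ x) := by
  refine ⟨involutionPairs σ, ⟨two_mul_card_involutionPairs hσ hfix, ?_, ?_, ?_⟩, ?_⟩
  · rintro p hp
    obtain ⟨a, rfl⟩ := mem_involutionPairs.1 hp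
    exact card_pair (hfix a).symm
  · refine fun x => ⟨{x, σ x}, ⟨mem_involutionPairs.2 ⟨x, rfl⟩, mem_insert_self x _⟩, ?_⟩
    rintro q ⟨hq, hxq⟩
    obtain ⟨a, rfl⟩ := mem_involutionPairs.1 hq
    exact ((pair_eq_pair_iff_mem hσ).2 hxq).symm
  · intro p hp x hx y hy hxy
    obtain ⟨a, rfl⟩ := mem_involutionPairs.1 hp
    simp only [mem_insert, mem_singleton] at hx hy
    rcases hx with rfl | rfl <;> rcases hy with rfl | rfl
    exacts [absurd rfl hxy, rfl, (hσ _).symm, absurd rfl hxy]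
  · rintro Q ⟨-, hQ2, hQcover, hQσ⟩
    ext p
    refine ⟨fun hp => mem_involutionPairs.2 (exists_eq_pair_of_forall_mem (hQ2 p hp) (hQσ p hp)),
      fun hp => ?_⟩
    obtain ⟨a, rfl⟩ := mem_involutionPairs.1 hp
    obtain ⟨q, ⟨hq, haq⟩, -⟩ := hQcover a
    obtain ⟨b, rfl⟩ := exists_eq_pair_of_forall_mem (hQ2 q hq) (hQσ q hq)
    rwa [(pair_eq_pair_iff_mem hσ).2 haq]

end InvolutionPairs

/-- Property (iii) of the warping matrix: two warping degree sequences sum to the constant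
sequence `(c, c, …, c)` exactly when the assignments are pointwise negations of each other;
consequently the `2^c` assignments split uniquely into `2^(c-1)` disjoint pairs of rows
summing to `(c, c, …, c)`. -/
theorem warpingDegree_pairs (c : ℕ) (hc : 1 ≤ c) (w : Fin (2*c) → Fin c)
    (hw : IsGaussWord c w) :
    (∀ x y : Fin c → Bool,
      (∀ b : Fin (2*c), warpingDegree c w x b + warpingDegree c w y b = c) ↔
        y = fun i => !(x i)) ∧
    (∃! P : Finset (Finset (Fin c → Bool)),
      P.card = 2^(c-1) ∧ (∀ p ∈ P, p.card = 2) ∧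
      (∀ x : Fin c → Bool, ∃! p, p ∈ P ∧ x ∈ p) ∧
      (∀ p ∈ P, ∀ x ∈ p, ∀ y ∈ p, x ≠ y →
        ∀ b : Fin (2*c), warpingDegree c w x b + warpingDegree c w y b = c)) := by
  refine ⟨hw.warpingDegree_add_eq_iff, ?_⟩
  have hnot : Function.Involutive fun (x : Fin c → Bool) i => !x i := fun x => by simp
  have hfix : ∀ x : Fin c → Bool, (fun i => !x i) ≠ x := fun x h => by
    simpa using congrFun h ⟨0, hc⟩
  have hcard : Fintype.card (Fin c → Bool) = 2 * 2^(c-1) := by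
    rw [Fintype.card_fun, Fintype.card_bool, Fintype.card_fin, ← pow_succ', Nat.sub_add_cancel hc]
  simp_rw [hw.warpingDegree_add_eq_iff]
  refine (existsUnique_congr fun P => ?_).1 (existsUnique_involutionPairs hnot hfix)
  rw [hcard, mul_right_inj' two_ne_zero]

end Warping
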